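/- Let R_aa ⪰ 0 symmetric, D ≻ 0 symmetric, both m×m, with 3D - R_aa ⪰ 0, and let [[R_aa, R_au],[R_au^T, R_uu]] ⪰ 0. Then for all vectors a, c ∈ ℝ^m and u ∈ ℝ^s: a^T(R_aa + D)a + 2a^T R_au u + u^T R_uu u + a^T(R_aa + D)c + u^T R_au^T c + c^T D c ≥ 0. -/

import Mathlib

/-! Completing the square in `a` with `b = a + c / 2` writes the form as the block form of
`[[R_aa, R_au], [R_auᵀ, R_uu]]` at `(b, u)`, plus `bᵀ D b`, plus `¼ cᵀ (3D - R_aa) c`;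
each of the three summands is nonnegative. -/

open Matrix

section

variable {m n : Type*} [Fintype m] [Fintype n]

lemma Matrix.PosSemidef.fromBlocks_dotProduct_mulVec_nonneg {A : Matrix m m ℝ} {B : Matrix m n ℝ}
    {C : Matrix n n ℝ} (h : (fromBlocks A B Bᵀ C).PosSemidef) (x : m → ℝ) (y : n → ℝ) :
    0 ≤ x ⬝ᵥ A *ᵥ x + 2 * (x ⬝ᵥ B *ᵥ y) + y ⬝ᵥ C *ᵥ y := by
  have := h.dotProduct_mulVec_nonneg (Sum.elim x y)
  rw [fromBlocks_mulVec, star_trivial, Sum.elim_comp_inl, Sum.elim_comp_inr,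
    sumElim_dotProduct_sumElim, dotProduct_add, dotProduct_add, dotProduct_transpose_mulVec] at this
  linarith

lemma quadForm_eq_blockForm_add_add {A D : Matrix m m ℝ} (hA : A.IsSymm) (hD : D.IsSymm)
    (B : Matrix m n ℝ) (C : Matrix n n ℝ) {a b c : m → ℝ} (hb : b = a + (1 / 2 : ℝ) • c)
    (u : n → ℝ) :
    a ⬝ᵥ (A + D) *ᵥ a + 2 * (a ⬝ᵥ B *ᵥ u) + u ⬝ᵥ C *ᵥ u
        + a ⬝ᵥ (A + D) *ᵥ c + u ⬝ᵥ Bᵀ *ᵥ c + c ⬝ᵥ D *ᵥ c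
      = (b ⬝ᵥ A *ᵥ b + 2 * (b ⬝ᵥ B *ᵥ u) + u ⬝ᵥ C *ᵥ u) + b ⬝ᵥ D *ᵥ b
          + (1 / 4) * (c ⬝ᵥ ((3 : ℝ) • D - A) *ᵥ c) := by
  have hAca : c ⬝ᵥ A *ᵥ a = a ⬝ᵥ A *ᵥ c := by
    rw [← dotProduct_transpose_mulVec, hA]
  have hDca : c ⬝ᵥ D *ᵥ a = a ⬝ᵥ D *ᵥ c := by
    rw [← dotProduct_transpose_mulVec, hD]
  subst hb
  simp only [mulVec_add, mulVec_smul, add_mulVec, sub_mulVec, smul_mulVec, dotProduct_add,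
    add_dotProduct, dotProduct_sub, dotProduct_smul, smul_dotProduct, smul_eq_mul,
    dotProduct_transpose_mulVec, hAca, hDca]
  ring

end

theorem stmt_19 {m s : ℕ}
    (Raa D : Matrix (Fin m) (Fin m) ℝ) (Ruu : Matrix (Fin s) (Fin s) ℝ)
    (Rau : Matrix (Fin m) (Fin s) ℝ)
    (hRaa : Raa.IsSymm) (hDsymm : D.IsSymm)
    (hD : D.PosDef)
    (hbound : ((3 : ℝ) • D - Raa).PosSemidef)
    (hR : (Matrix.fromBlocks Raa Rau Rauᵀ Ruu).PosSemidef) :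
    ∀ (a c : Fin m → ℝ) (u : Fin s → ℝ),
      0 ≤ a ⬝ᵥ (Raa + D).mulVec a + 2 * (a ⬝ᵥ Rau.mulVec u) + u ⬝ᵥ Ruu.mulVec u
          + a ⬝ᵥ (Raa + D).mulVec c + u ⬝ᵥ Rauᵀ.mulVec c + c ⬝ᵥ D.mulVec c := by
  intro a c u
  rw [quadForm_eq_blockForm_add_add hRaa hDsymm Rau Ruu rfl u]
  have hblock := hR.fromBlocks_dotProduct_mulVec_nonneg (a + (1 / 2 : ℝ) • c) u
  have hDb := hD.posSemidef.dotProduct_mulVec_nonneg (a + (1 / 2 : ℝ) • c)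
  have hc := hbound.dotProduct_mulVec_nonneg c
  simp only [star_trivial] at hDb hc
  exact add_nonneg (add_nonneg hblock hDb) (mul_nonneg (by norm_num) hc)
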